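/- Let ω ≥ 0, μ > 0, τ > 0 with μτ < 1/e, let Ψ(t) = dexp(-μt; -μτ) with density ψ(t) = μ dexp(-μ(t-τ); -μτ), and let q : [0,∞) → ℝ be continuous. Define ρ(t) = ∫_0^t q(t₀) e^{-ω(t-t₀)} Ψ(t-t₀) dt₀, extended by ρ(t) = 0 for t < 0. Then ρ satisfies the delay differential equation ρ'(t) = q(t) - ω ρ(t) - μ e^{-ωτ} ρ(t - τ) for t > 0 (away from points of non-differentiability). -/

import Mathlib

/-!
Put `Q(s) = e^{ωs} q(s)` and `σ = dexpConv Q μ τ`, so that `ρ(t) = e^{-ωt} σ(t)`; it suffices to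
show `σ' = Q - μ σ(· - τ)`. Integrating the series of `dexp` term by term gives the integrated
delay equation `dexp u = 1 - μ ∫₀^{u-τ} dexp` for `u ≥ 0`. Substituting it into `σ` and
exchanging the order of integration yields `σ(x) = ∫₀ˣ (Q(s) - μ σ(s - τ)) ds`. Since `dexp` is
locally a finite sum whose only jump is at `0`, `σ` is continuous, and the fundamental theorem of
calculus gives the derivative at every `t > 0`.
-/

open Real Set intervalIntegral

noncomputable def dexp (μ τ t : ℝ) : ℝ :=
  ∑' n : ℕ, (-μ) ^ n * (t - n * τ) ^ n / (Nat.factorial n) * (if (n : ℝ) * τ ≤ t then 1 else 0)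

open MeasureTheory Filter Topology

noncomputable def dexpTerm (μ τ : ℝ) (n : ℕ) (u : ℝ) : ℝ :=
  (-μ) ^ n * (u - n * τ) ^ n / (Nat.factorial n) * (if (n : ℝ) * τ ≤ u then 1 else 0)

section DelayExponential

variable {μ τ : ℝ}

lemma dexpTerm_of_lt {n : ℕ} {u : ℝ} (hu : u < n * τ) : dexpTerm μ τ n u = 0 := by
  simp [dexpTerm, not_le.2 hu]

lemma exists_lt_natCast_mul (hτ : 0 < τ) (u : ℝ) : ∃ N : ℕ, u < N * τ := by
  simpa only [nsmul_eq_mul] using exists_lt_nsmul hτ u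

lemma dexp_eq_sum_range (hτ : 0 < τ) {N : ℕ} {u : ℝ} (hu : u < N * τ) :
    dexp μ τ u = ∑ n ∈ Finset.range N, dexpTerm μ τ n u := by
  refine tsum_eq_sum fun n hn => dexpTerm_of_lt (hu.trans_le ?_)
  gcongr
  exact_mod_cast not_lt.1 (mt Finset.mem_range.2 hn)

lemma dexp_of_neg (hτ : 0 < τ) {u : ℝ} (hu : u < 0) : dexp μ τ u = 0 := by
  simpa using dexp_eq_sum_range (μ := μ) (N := 0) hτ (by simpa using hu)

lemma measurable_dexpTerm (n : ℕ) : Measurable (dexpTerm μ τ n) := by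
  unfold dexpTerm
  exact Measurable.mul (by fun_prop)
    (Measurable.ite measurableSet_Ici measurable_const measurable_const)

lemma measurable_dexp (hτ : 0 < τ) : Measurable (dexp μ τ) := by
  refine measurable_of_tendsto_metrizable' (f := fun N u => ∑ n ∈ Finset.range N, dexpTerm μ τ n u)
    atTop (fun N => Finset.measurable_sum _ fun n _ => measurable_dexpTerm n)
    (tendsto_pi_nhds.2 fun u => tendsto_nhds_of_eventually_eq ?_)
  obtain ⟨N₀, hN₀⟩ := exists_lt_natCast_mul hτ u
  filter_upwards [eventually_ge_atTop N₀] with N hN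
  refine (dexp_eq_sum_range hτ (hN₀.trans_le ?_)).symm
  gcongr

lemma abs_dexpTerm_le (hτ : 0 ≤ τ) (n : ℕ) {u R : ℝ} (hu : u ≤ R) :
    |dexpTerm μ τ n u| ≤ (|μ| * |R|) ^ n / n.factorial := by
  by_cases h : (n : ℝ) * τ ≤ u
  · have hnτ : 0 ≤ (n : ℝ) * τ := by positivity
    rw [dexpTerm, if_pos h, mul_one, abs_div, abs_mul, abs_pow, abs_pow, abs_neg,
      Nat.abs_cast, mul_pow]
    gcongr
    all_goals linarith [le_abs_self R]
  · rw [dexpTerm_of_lt (not_le.1 h), abs_zero]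
    positivity

lemma abs_dexp_le (hτ : 0 < τ) {u R : ℝ} (hu : u ≤ R) : |dexp μ τ u| ≤ exp (|μ| * |R|) := by
  obtain ⟨N, hN⟩ := exists_lt_natCast_mul hτ u
  calc |dexp μ τ u| ≤ ∑ n ∈ Finset.range N, |dexpTerm μ τ n u| := by
        rw [dexp_eq_sum_range hτ hN]
        exact Finset.abs_sum_le_sum_abs _ _
    _ ≤ ∑ n ∈ Finset.range N, (|μ| * |R|) ^ n / n.factorial :=
        Finset.sum_le_sum fun n _ => abs_dexpTerm_le hτ.le n hu
    _ ≤ exp (|μ| * |R|) := sum_le_exp_of_nonneg (by positivity) N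

lemma intervalIntegrable_of_abs_le {f : ℝ → ℝ} (hf : Measurable f) (C : ℝ → ℝ)
    (hC : ∀ R, ∀ u ≤ R, |f u| ≤ C R) (a b : ℝ) : IntervalIntegrable f volume a b :=
  (intervalIntegrable_iff).2 <| IntegrableOn.of_bound measure_Ioc_lt_top
    hf.aestronglyMeasurable.restrict (C (max a b)) <|
    (ae_restrict_iff' measurableSet_uIoc).2 <| .of_forall fun _ hu => hC _ _ hu.2

lemma intervalIntegrable_dexpTerm (hτ : 0 ≤ τ) (n : ℕ) (a b : ℝ) :
    IntervalIntegrable (dexpTerm μ τ n) volume a b :=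
  intervalIntegrable_of_abs_le (measurable_dexpTerm n) _ (fun _ _ => abs_dexpTerm_le hτ n) a b

lemma intervalIntegrable_dexp (hτ : 0 < τ) (a b : ℝ) :
    IntervalIntegrable (dexp μ τ) volume a b :=
  intervalIntegrable_of_abs_le (measurable_dexp hτ) _ (fun _ _ => abs_dexp_le hτ) a b

lemma dexpTerm_eq_max_pow {n : ℕ} (hn : n ≠ 0) :
    dexpTerm μ τ n = fun u => (-μ) ^ n * max (u - n * τ) 0 ^ n / n.factorial := by
  ext u
  by_cases h : (n : ℝ) * τ ≤ u
  · simp [dexpTerm, h]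
  · simp [dexpTerm, h, max_eq_right (sub_nonpos.2 (not_le.1 h).le), zero_pow hn]

lemma continuousAt_dexpTerm (n : ℕ) {u : ℝ} (hu : u ≠ 0) : ContinuousAt (dexpTerm μ τ n) u := by
  rcases eq_or_ne n 0 with rfl | hn
  · have hloc : dexpTerm μ τ 0 =ᶠ[𝓝 u] fun _ => dexpTerm μ τ 0 u := by
      rcases hu.lt_or_gt with h | h
      · filter_upwards [Iio_mem_nhds h] with v hv
        simp [dexpTerm, not_le.2 h, not_le.2 (mem_Iio.1 hv)]
      · filter_upwards [Ioi_mem_nhds h] with v hv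
        simp [dexpTerm, h.le, (mem_Ioi.1 hv).le]
    exact continuousAt_const.congr hloc.symm
  · rw [dexpTerm_eq_max_pow hn]
    fun_prop

lemma continuousAt_dexp (hτ : 0 < τ) {u : ℝ} (hu : u ≠ 0) : ContinuousAt (dexp μ τ) u := by
  obtain ⟨N, hN⟩ := exists_lt_natCast_mul hτ u
  refine ContinuousAt.congr (f := fun v => ∑ n ∈ Finset.range N, dexpTerm μ τ n v)
    (tendsto_finsetSum _ fun n _ => continuousAt_dexpTerm n hu) ?_
  filter_upwards [Iio_mem_nhds hN] with v hv
  exact (dexp_eq_sum_range hτ hv).symm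

lemma integral_dexpTerm_of_le (hτ : 0 ≤ τ) {n : ℕ} {b : ℝ} (hb : b ≤ n * τ) :
    ∫ s in (0 : ℝ)..b, dexpTerm μ τ n s = 0 := by
  have hnτ : 0 ≤ (n : ℝ) * τ := by positivity
  rw [intervalIntegral.integral_congr_ae (g := fun _ => 0), intervalIntegral.integral_zero]
  filter_upwards [volume.ae_ne ((n : ℝ) * τ)] with s hs hmem
  exact dexpTerm_of_lt (lt_of_le_of_ne (hmem.2.trans (max_le hnτ hb)) hs)

lemma integral_dexpTerm_of_ge (hτ : 0 ≤ τ) {n : ℕ} {b : ℝ} (hb : n * τ ≤ b) :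
    ∫ s in (0 : ℝ)..b, dexpTerm μ τ n s
      = (-μ) ^ n / n.factorial * ((b - n * τ) ^ (n + 1) / (n + 1)) := by
  rw [← integral_add_adjacent_intervals (b := (n : ℝ) * τ) (intervalIntegrable_dexpTerm hτ n _ _)
    (intervalIntegrable_dexpTerm hτ n _ _), integral_dexpTerm_of_le hτ le_rfl, zero_add,
    integral_congr (g := fun s => (-μ) ^ n / n.factorial * (s - n * τ) ^ n),
    intervalIntegral.integral_const_mul, integral_comp_sub_right (fun s => s ^ n), integral_pow]
  · simp
  · intro s hs
    rw [uIcc_of_le hb] at hs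
    simp only [dexpTerm, if_pos hs.1]
    ring

lemma dexpTerm_succ_add (hτ : 0 ≤ τ) (n : ℕ) (b : ℝ) :
    dexpTerm μ τ (n + 1) (b + τ) = -μ * ∫ s in (0 : ℝ)..b, dexpTerm μ τ n s := by
  rcases le_or_gt ((n : ℝ) * τ) b with hb | hb
  · have hle : ((n + 1 : ℕ) : ℝ) * τ ≤ b + τ := by push_cast; linarith
    rw [integral_dexpTerm_of_ge hτ hb, dexpTerm, if_pos hle, Nat.factorial_succ]
    push_cast
    field_simp
    ring
  · rw [integral_dexpTerm_of_le hτ hb.le, mul_zero, dexpTerm_of_lt]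
    push_cast
    linarith

theorem dexp_eq_one_sub_integral (hτ : 0 < τ) {u : ℝ} (hu : 0 ≤ u) :
    dexp μ τ u = 1 - μ * ∫ s in (0 : ℝ)..(u - τ), dexp μ τ s := by
  obtain ⟨N, hN⟩ := exists_lt_natCast_mul hτ u
  have hNτ : 0 < (N : ℝ) * τ := hu.trans_lt hN
  have hsum : ∫ s in (0 : ℝ)..(u - τ), dexp μ τ s
      = ∫ s in (0 : ℝ)..(u - τ), ∑ n ∈ Finset.range N, dexpTerm μ τ n s := by
    refine integral_congr fun s hs => dexp_eq_sum_range hτ ?_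
    rcases mem_uIcc.1 hs with h | h <;> linarith
  rw [dexp_eq_sum_range (N := N + 1) hτ (by push_cast; linarith), Finset.sum_range_succ', hsum,
    intervalIntegral.integral_finsetSum fun n _ => intervalIntegrable_dexpTerm hτ.le n _ _,
    Finset.mul_sum]
  have hzero : dexpTerm μ τ 0 u = 1 := by simp [dexpTerm, hu]
  have hsucc (n : ℕ) :
      dexpTerm μ τ (n + 1) u = -(μ * ∫ s in (0 : ℝ)..(u - τ), dexpTerm μ τ n s) := by
    rw [← neg_mul, ← dexpTerm_succ_add hτ.le, sub_add_cancel]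
  simp only [hzero, hsucc, Finset.sum_neg_distrib]
  ring

end DelayExponential

noncomputable def dexpConv (Q : ℝ → ℝ) (μ τ : ℝ) (x : ℝ) : ℝ :=
  if x < 0 then 0 else ∫ t₀ in (0 : ℝ)..x, Q t₀ * dexp μ τ (x - t₀)

section Convolution

variable {Q : ℝ → ℝ} {μ τ : ℝ}

lemma intervalIntegrable_mul_dexp (hτ : 0 < τ) (hQ : ContinuousOn Q (Ici 0)) (c : ℝ) {a b : ℝ}
    (ha : 0 ≤ a) (hb : 0 ≤ b) :
    IntervalIntegrable (fun t₀ => Q t₀ * dexp μ τ (c - t₀)) volume a b := by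
  have hdexp : IntervalIntegrable (fun t₀ => dexp μ τ (c - t₀)) volume a b := by
    simpa using (intervalIntegrable_dexp (μ := μ) hτ (c - a) (c - b)).comp_sub_left c
  exact hdexp.continuousOn_mul (hQ.mono fun t ht => le_trans (le_min ha hb) ht.1)

lemma exists_abs_mul_dexp_le (hτ : 0 < τ) (hQ : ContinuousOn Q (Ici 0)) (c R : ℝ) :
    ∃ C, ∀ t₀ ∈ Icc 0 c, ∀ y ≤ R, |Q t₀ * dexp μ τ (y - t₀)| ≤ C := by
  obtain ⟨CQ, hCQ⟩ := isCompact_Icc.exists_bound_of_continuousOn (hQ.mono Icc_subset_Ici_self)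
  refine ⟨CQ * exp (|μ| * |R|), fun t₀ ht₀ y hy => ?_⟩
  rw [abs_mul]
  exact mul_le_mul (hCQ t₀ ht₀) (abs_dexp_le hτ (by linarith [ht₀.1])) (abs_nonneg _)
    ((abs_nonneg _).trans (hCQ t₀ ht₀))

lemma integral_mul_dexp_eq_zero (hτ : 0 < τ) {y a b : ℝ} (hya : y ≤ a) (hab : a ≤ b) :
    ∫ t₀ in a..b, Q t₀ * dexp μ τ (y - t₀) = 0 := by
  refine (intervalIntegral.integral_congr_ae (g := fun _ => 0) (.of_forall fun t₀ ht₀ => ?_)).trans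
    intervalIntegral.integral_zero
  rw [uIoc_of_le hab] at ht₀
  rw [dexp_of_neg hτ (by linarith [ht₀.1]), mul_zero]

lemma dexpConv_eq_integral (hτ : 0 < τ) (hQ : ContinuousOn Q (Ici 0)) {c y : ℝ} (hc : 0 ≤ c)
    (hy : y ≤ c) : dexpConv Q μ τ y = ∫ t₀ in (0 : ℝ)..c, Q t₀ * dexp μ τ (y - t₀) := by
  rcases lt_or_ge y 0 with hy₀ | hy₀
  · rw [dexpConv, if_pos hy₀, integral_mul_dexp_eq_zero hτ hy₀.le hc]
  · rw [dexpConv, if_neg (not_lt.2 hy₀), ← integral_add_adjacent_intervals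
      (intervalIntegrable_mul_dexp hτ hQ y le_rfl hy₀) (intervalIntegrable_mul_dexp hτ hQ y hy₀ hc),
      integral_mul_dexp_eq_zero hτ le_rfl hy, add_zero]

lemma continuous_integral_mul_dexp (hτ : 0 < τ) (hQ : ContinuousOn Q (Ici 0)) {c : ℝ}
    (hc : 0 ≤ c) : Continuous fun y => ∫ t₀ in (0 : ℝ)..c, Q t₀ * dexp μ τ (y - t₀) := by
  refine continuous_iff_continuousAt.2 fun y₀ => ?_
  obtain ⟨C, hC⟩ := exists_abs_mul_dexp_le (μ := μ) hτ hQ c (y₀ + 1)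
  refine continuousAt_of_dominated_interval (bound := fun _ => C)
    (.of_forall fun y => (intervalIntegrable_mul_dexp hτ hQ y le_rfl hc).def'.aestronglyMeasurable)
    ?_ intervalIntegrable_const ?_
  · filter_upwards [Iio_mem_nhds (lt_add_one y₀)] with y hy
    refine .of_forall fun t₀ ht₀ => hC t₀ ?_ y (le_of_lt hy)
    rw [uIoc_of_le hc] at ht₀
    exact Ioc_subset_Icc_self ht₀
  · filter_upwards [volume.ae_ne y₀] with t₀ ht₀ _
    exact continuousAt_const.mul <| (continuousAt_dexp hτ (sub_ne_zero.2 ht₀.symm)).comp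
      (f := fun y => y - t₀) (continuous_sub_right t₀).continuousAt

lemma continuous_dexpConv (hτ : 0 < τ) (hQ : ContinuousOn Q (Ici 0)) :
    Continuous (dexpConv Q μ τ) := by
  refine continuous_iff_continuousAt.2 fun y₀ => ?_
  have hc : y₀ < |y₀| + 1 := by linarith [le_abs_self y₀]
  refine ContinuousAt.congr (continuous_integral_mul_dexp (μ := μ) (c := |y₀| + 1) hτ hQ
    (by positivity)).continuousAt ?_
  filter_upwards [Iio_mem_nhds hc] with y hy
  exact (dexpConv_eq_integral hτ hQ (by positivity) (le_of_lt hy)).symm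

lemma integral_dexp_comp_sub (hτ : 0 < τ) {a : ℝ} (ha : 0 ≤ a) (x : ℝ) :
    ∫ s in (0 : ℝ)..x, dexp μ τ (s - a) = ∫ v in (0 : ℝ)..(x - a), dexp μ τ v := by
  have hneg : ∫ v in (0 - a)..0, dexp μ τ v = 0 := by
    refine (intervalIntegral.integral_congr_ae (g := fun _ => 0) ?_).trans
      intervalIntegral.integral_zero
    filter_upwards [volume.ae_ne 0] with v hv hmem
    rw [uIoc_of_le (by linarith)] at hmem
    exact dexp_of_neg hτ (lt_of_le_of_ne hmem.2 hv)
  rw [intervalIntegral.integral_comp_sub_right, ← integral_add_adjacent_intervals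
    (intervalIntegrable_dexp hτ _ 0) (intervalIntegrable_dexp hτ 0 _), hneg, zero_add]

lemma integral_dexpConv_sub (hτ : 0 < τ) (hQ : ContinuousOn Q (Ici 0)) {x : ℝ} (hx : 0 ≤ x) :
    ∫ s in (0 : ℝ)..x, dexpConv Q μ τ (s - τ)
      = ∫ t₀ in (0 : ℝ)..x, Q t₀ * ∫ v in (0 : ℝ)..(x - τ - t₀), dexp μ τ v := by
  have hint : IntegrableOn (fun p : ℝ × ℝ => Q p.2 * dexp μ τ (p.1 - τ - p.2))
      (uIoc 0 x ×ˢ uIoc 0 x) := by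
    rw [uIoc_of_le hx]
    obtain ⟨C, hC⟩ := exists_abs_mul_dexp_le (μ := μ) hτ hQ x x
    refine IntegrableOn.of_bound
      (by simp [Measure.volume_eq_prod, Measure.prod_prod, ENNReal.mul_lt_top])
      (AEStronglyMeasurable.mul ?_ ?_) C ?_
    · exact (hQ.comp continuous_snd.continuousOn fun p hp => (Ioc_subset_Icc_self hp.2).1)
        |>.aestronglyMeasurable (measurableSet_Ioc.prod measurableSet_Ioc)
    · exact ((measurable_dexp hτ).comp (by fun_prop)).aestronglyMeasurable
    · refine (ae_restrict_iff' (measurableSet_Ioc.prod measurableSet_Ioc)).2 (.of_forall ?_)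
      rintro ⟨s, t₀⟩ ⟨hs, ht₀⟩
      exact hC t₀ (Ioc_subset_Icc_self ht₀) _ (by linarith [hs.2])
  calc ∫ s in (0 : ℝ)..x, dexpConv Q μ τ (s - τ)
      = ∫ s in (0 : ℝ)..x, ∫ t₀ in (0 : ℝ)..x, Q t₀ * dexp μ τ (s - τ - t₀) := by
        refine integral_congr fun s hs => dexpConv_eq_integral hτ hQ hx ?_
        linarith [(uIcc_of_le hx ▸ hs).2]
    _ = ∫ t₀ in (0 : ℝ)..x, ∫ s in (0 : ℝ)..x, Q t₀ * dexp μ τ (s - τ - t₀) :=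
        intervalIntegral_intervalIntegral_swap hint
    _ = ∫ t₀ in (0 : ℝ)..x, Q t₀ * ∫ v in (0 : ℝ)..(x - τ - t₀), dexp μ τ v := by
        refine integral_congr fun t₀ ht₀ => ?_
        simp only [intervalIntegral.integral_const_mul, sub_sub]
        rw [integral_dexp_comp_sub hτ (by linarith [(uIcc_of_le hx ▸ ht₀).1])]

theorem dexpConv_eq_integral_sub (hτ : 0 < τ) (hQ : ContinuousOn Q (Ici 0)) {x : ℝ} (hx : 0 ≤ x) :
    dexpConv Q μ τ x = ∫ s in (0 : ℝ)..x, (Q s - μ * dexpConv Q μ τ (s - τ)) := by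
  have hQint : IntervalIntegrable Q volume 0 x :=
    (hQ.mono fun s hs => (uIcc_of_le hx ▸ hs).1).intervalIntegrable
  have hprim : Continuous fun w => ∫ v in (0 : ℝ)..w, dexp μ τ v :=
    continuous_primitive (intervalIntegrable_dexp hτ) 0
  have hQprim : IntervalIntegrable (fun t₀ => Q t₀ * ∫ v in (0 : ℝ)..(x - τ - t₀), dexp μ τ v)
      volume 0 x :=
    ((hprim.comp (by fun_prop)).intervalIntegrable 0 x).continuousOn_mul
      (hQ.mono fun s hs => (uIcc_of_le hx ▸ hs).1)
  have hshift : IntervalIntegrable (fun s => dexpConv Q μ τ (s - τ)) volume 0 x :=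
    ((continuous_dexpConv hτ hQ).comp (continuous_sub_right τ)).intervalIntegrable 0 x
  calc dexpConv Q μ τ x
      = ∫ t₀ in (0 : ℝ)..x, (Q t₀ - μ * (Q t₀ * ∫ v in (0 : ℝ)..(x - τ - t₀), dexp μ τ v)) := by
        rw [dexpConv, if_neg (not_lt.2 hx)]
        refine integral_congr fun t₀ ht₀ => ?_
        rw [dexp_eq_one_sub_integral hτ (by linarith [(uIcc_of_le hx ▸ ht₀).2]), sub_right_comm]
        ring
    _ = ∫ s in (0 : ℝ)..x, (Q s - μ * dexpConv Q μ τ (s - τ)) := by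
        rw [integral_sub hQint (hQprim.const_mul μ), integral_sub hQint (hshift.const_mul μ),
          intervalIntegral.integral_const_mul, intervalIntegral.integral_const_mul,
          integral_dexpConv_sub hτ hQ hx]

theorem hasDerivAt_dexpConv (hτ : 0 < τ) (hQ : ContinuousOn Q (Ici 0)) {t : ℝ} (ht : 0 < t) :
    HasDerivAt (dexpConv Q μ τ) (Q t - μ * dexpConv Q μ τ (t - τ)) t := by
  have hcont : ContinuousOn (fun s => Q s - μ * dexpConv Q μ τ (s - τ)) (Ici 0) :=
    hQ.sub (continuousOn_const.mul
      ((continuous_dexpConv hτ hQ).comp (continuous_sub_right τ)).continuousOn)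
  refine (integral_hasDerivAt_right
    ((hcont.mono fun s hs => (uIcc_of_le ht.le ▸ hs).1).intervalIntegrable)
    ((hcont.mono Ioi_subset_Ici_self).stronglyMeasurableAtFilter isOpen_Ioi t ht)
    (hcont.continuousAt (Ici_mem_nhds ht))).congr_of_eventuallyEq ?_
  filter_upwards [Ioi_mem_nhds ht] with x hx
  exact dexpConv_eq_integral_sub hτ hQ (le_of_lt hx)

end Convolution

lemma exp_mul_dexpConv (q : ℝ → ℝ) (ω μ τ x : ℝ) :
    exp (-ω * x) * dexpConv (fun s => exp (ω * s) * q s) μ τ x = if x < 0 then 0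
      else ∫ t₀ in (0 : ℝ)..x, q t₀ * exp (-ω * (x - t₀)) * dexp μ τ (x - t₀) := by
  unfold dexpConv
  split_ifs
  · exact mul_zero _
  · rw [← intervalIntegral.integral_const_mul]
    refine integral_congr fun t₀ _ => ?_
    have hexp : exp (-ω * (x - t₀)) = exp (-ω * x) * exp (ω * t₀) := by
      rw [← exp_add]
      ring_nf
    simp only [hexp]
    ring

theorem compartment_delay_equation_general (q : ℝ → ℝ) (ω μ τ : ℝ)
    (hτ : 0 < τ) (hq : ContinuousOn q (Ici 0))
    (ρ : ℝ → ℝ)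
    (hρ : ρ = fun t => if t < 0 then 0
        else ∫ t₀ in (0 : ℝ)..t, q t₀ * Real.exp (-ω * (t - t₀)) * dexp μ τ (t - t₀))
    (t : ℝ) (ht : 0 < t) :
    HasDerivAt ρ (q t - ω * ρ t - μ * Real.exp (-ω * τ) * ρ (t - τ)) t := by
  set Q : ℝ → ℝ := fun s => exp (ω * s) * q s
  have hQ : ContinuousOn Q (Ici 0) := by fun_prop
  have hρQ : ρ = fun x => exp (-ω * x) * dexpConv Q μ τ x := by
    rw [hρ]
    exact funext fun x => (exp_mul_dexpConv q ω μ τ x).symm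
  have hexp : HasDerivAt (fun x => exp (-ω * x)) (exp (-ω * t) * -ω) t := by
    simpa using ((hasDerivAt_id t).const_mul (-ω)).exp
  rw [hρQ]
  refine (hexp.mul (hasDerivAt_dexpConv (μ := μ) hτ hQ ht)).congr_deriv ?_
  beta_reduce
  have hcancel : exp (-ω * t) * exp (ω * t) = 1 := by rw [← exp_add]; ring_nf; exact exp_zero
  have hshift : exp (-ω * τ) * exp (-ω * (t - τ)) = exp (-ω * t) := by rw [← exp_add]; ring_nf
  linear_combination q t * hcancel + μ * dexpConv Q μ τ (t - τ) * hshift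

/-- The compartment content `ρ(t) = ∫₀ᵗ q(t₀) e^{-ω(t-t₀)} Ψ(t-t₀) dt₀` (with
`Ψ = dexp(-μ·; -μτ)` and `ρ(t) = 0` for `t < 0`) satisfies the delay differential
equation `ρ'(t) = q(t) - ω ρ(t) - μ e^{-ωτ} ρ(t-τ)` for `t > 0` away from the integer
multiples of `τ`. -/
theorem compartment_delay_equation (q : ℝ → ℝ) (ω μ τ : ℝ) (hω : 0 ≤ ω) (hμ : 0 < μ)
    (hτ : 0 < τ) (hμτ : μ * τ < (Real.exp 1)⁻¹) (hq : ContinuousOn q (Ici 0))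
    (ρ : ℝ → ℝ)
    (hρ : ρ = fun t => if t < 0 then 0
        else ∫ t₀ in (0 : ℝ)..t, q t₀ * Real.exp (-ω * (t - t₀)) * dexp μ τ (t - t₀))
    (t : ℝ) (ht : 0 < t) (hmult : ∀ n : ℕ, t ≠ n * τ) :
    HasDerivAt ρ (q t - ω * ρ t - μ * Real.exp (-ω * τ) * ρ (t - τ)) t :=
  compartment_delay_equation_general q ω μ τ hτ hq ρ hρ t ht
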